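/- arXiv:2407.06203 — 2 statements merged into one kernel-verified Lean document; each statement's English description precedes it below -/
import Mathlib

section
/- If fuzzy soft sets (S,A) and (G,B) over X satisfy both mutual internal approximation ((S,A) ⊆ (G,B) and (G,B) ⊆ (S,A)), then MIN(τ(S,A)) = MIN(τ(G,B)). -/
lemma min_subset_aux {X A B : Type*} (S : A → X → ℝ) (G : B → X → ℝ)
    (h1 : ∀ b : B, G b ≠ 0 → ∃ a : A, S a ≠ 0 ∧ S a ≤ G b)
    (h2 : ∀ a : A, S a ≠ 0 → ∃ b : B, G b ≠ 0 ∧ G b ≤ S a) :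
    {C : X → ℝ | (∃ a, S a = C) ∧ C ≠ 0 ∧ ¬∃ D, (∃ a, S a = D) ∧ D ≠ 0 ∧ D < C} ⊆
    {C : X → ℝ | (∃ b, G b = C) ∧ C ≠ 0 ∧ ¬∃ D, (∃ b, G b = D) ∧ D ≠ 0 ∧ D < C} := by
  rintro C ⟨⟨a, rfl⟩, hC0, hmin⟩
  obtain ⟨b, hb0, hble⟩ := h2 a hC0
  obtain ⟨a', ha'0, ha'le⟩ := h1 b hb0
  have hle : S a' ≤ S a := ha'le.trans hble
  have heq : S a' = S a := by
    by_contra hne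
    exact hmin ⟨S a', ⟨a', rfl⟩, ha'0, lt_of_le_of_ne hle hne⟩
  have hGb : G b = S a := le_antisymm hble (heq ▸ ha'le)
  refine ⟨⟨b, hGb⟩, hC0, ?_⟩
  rintro ⟨D, ⟨b', rfl⟩, hD0, hDlt⟩
  obtain ⟨a'', ha''0, ha''le⟩ := h1 b' hD0
  exact hmin ⟨S a'', ⟨a'', rfl⟩, ha''0, lt_of_le_of_lt ha''le hDlt⟩

/-- If fuzzy soft sets (S,A) and (G,B) over X mutually internally approximate
each other, then MIN(τ(S,A)) = MIN(τ(G,B)). -/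
theorem fuzzySoft_min_eq_of_mutual_internal {X A B : Type*}
    (S : A → X → ℝ) (G : B → X → ℝ)
    (hS : ∀ a x, S a x ∈ Set.Icc (0 : ℝ) 1) (hG : ∀ b x, G b x ∈ Set.Icc (0 : ℝ) 1)
    (h1 : ∀ b : B, G b ≠ 0 → ∃ a : A, S a ≠ 0 ∧ S a ≤ G b)
    (h2 : ∀ a : A, S a ≠ 0 → ∃ b : B, G b ≠ 0 ∧ G b ≤ S a) :
    {C : X → ℝ | (∃ a, S a = C) ∧ C ≠ 0 ∧ ¬∃ D, (∃ a, S a = D) ∧ D ≠ 0 ∧ D < C} =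
    {C : X → ℝ | (∃ b, G b = C) ∧ C ≠ 0 ∧ ¬∃ D, (∃ b, G b = D) ∧ D ≠ 0 ∧ D < C} :=
  Set.Subset.antisymm (min_subset_aux S G h1 h2) (min_subset_aux G S h2 h1)
end

section
/- If fuzzy soft sets (S,A) and (G,B) over X satisfy both mutual external approximation ((S,A) ⊇ (G,B) and (G,B) ⊇ (S,A)), then MAX(τ(S,A)) = MAX(τ(G,B)). -/
lemma fuzzySoft_max_subset {X A B : Type*}
    (S : A → X → ℝ) (G : B → X → ℝ)
    (h1 : ∀ b : B, G b ≠ 1 → ∃ a : A, S a ≠ 1 ∧ G b ≤ S a)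
    (h2 : ∀ a : A, S a ≠ 1 → ∃ b : B, G b ≠ 1 ∧ S a ≤ G b) :
    {C : X → ℝ | (∃ a, S a = C) ∧ C ≠ 1 ∧ ¬∃ D, (∃ a, S a = D) ∧ D ≠ 1 ∧ C < D} ⊆
    {C : X → ℝ | (∃ b, G b = C) ∧ C ≠ 1 ∧ ¬∃ D, (∃ b, G b = D) ∧ D ≠ 1 ∧ C < D} := by
  rintro C ⟨⟨a, rfl⟩, hC1, hmax⟩
  obtain ⟨b, hb1, hab⟩ := h2 a hC1
  obtain ⟨a', ha'1, hba'⟩ := h1 b hb1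
  have haa' : S a ≤ S a' := le_trans hab hba'
  have heq : S a = S a' := by
    by_contra hne
    exact hmax ⟨S a', ⟨a', rfl⟩, ha'1, lt_of_le_of_ne haa' hne⟩
  have hGb : G b = S a := le_antisymm (heq ▸ hba') hab
  refine ⟨⟨b, hGb⟩, hC1, ?_⟩
  rintro ⟨D, ⟨b', rfl⟩, hD1, hlt⟩
  obtain ⟨a'', ha''1, hD⟩ := h1 b' hD1
  exact hmax ⟨S a'', ⟨a'', rfl⟩, ha''1, lt_of_lt_of_le hlt hD⟩

/-- If fuzzy soft sets (S,A) and (G,B) over X mutually externally approximate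
each other, then MAX(τ(S,A)) = MAX(τ(G,B)). -/
theorem fuzzySoft_max_eq_of_mutual_external {X A B : Type*}
    (S : A → X → ℝ) (G : B → X → ℝ)
    (hS : ∀ a x, S a x ∈ Set.Icc (0 : ℝ) 1) (hG : ∀ b x, G b x ∈ Set.Icc (0 : ℝ) 1)
    (h1 : ∀ b : B, G b ≠ 1 → ∃ a : A, S a ≠ 1 ∧ G b ≤ S a)
    (h2 : ∀ a : A, S a ≠ 1 → ∃ b : B, G b ≠ 1 ∧ S a ≤ G b) :
    {C : X → ℝ | (∃ a, S a = C) ∧ C ≠ 1 ∧ ¬∃ D, (∃ a, S a = D) ∧ D ≠ 1 ∧ C < D} =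
    {C : X → ℝ | (∃ b, G b = C) ∧ C ≠ 1 ∧ ¬∃ D, (∃ b, G b = D) ∧ D ≠ 1 ∧ C < D} :=
  Set.Subset.antisymm (fuzzySoft_max_subset S G h1 h2) (fuzzySoft_max_subset G S h2 h1)
end
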